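/- Let I ⊆ ℝ be an interval and let a₊, a₋, β₁ : I → ℝ be differentiable functions with a₊(t) > 0 for all t ∈ I, satisfying the ODE system a₊' = 4·a₊·a₋, a₋' = 2·(a₊ + a₋ − 16)·a₋, and β₁' = −a₋·β₁. Then there exists a constant α ∈ ℝ such that a₋(t) = a₊(t) + 4α·√(a₊(t)) + 16 for all t ∈ I (equivalently, the function t ↦ (a₋(t) − a₊(t) − 16)/√(a₊(t)) is constant on I), and moreover the function t ↦ β₁(t)·a₊(t)^(1/4) is constant on I. -/

import Mathlib

/-!
With `q = √a₊` and `n = a₋ - a₊ - 16`, the system gives `q' = 2 a₋ q` and `n' = 2 a₋ n`,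
so both solve the same linear equation and `n / q` is constant. Likewise `r = a₊ ^ (1/4)` solves
`r' = a₋ r` while `β₁' = -a₋ β₁`, so `β₁ r` is constant.
-/

open Real

section Invariants

variable {x y : ℝ → ℝ} {k t : ℝ}

theorem HasDerivAt.mul_zero_of_opposite_rates (hx : HasDerivAt x (-k * x t) t)
    (hy : HasDerivAt y (k * y t) t) : HasDerivAt (fun u => x u * y u) 0 t :=
  (hx.mul hy).congr_deriv (by ring)

theorem HasDerivAt.div_zero_of_equal_rates (hx : HasDerivAt x (k * x t) t)
    (hy : HasDerivAt y (k * y t) t) (hy₀ : y t ≠ 0) : HasDerivAt (fun u => x u / y u) 0 t :=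
  (hx.div hy hy₀).congr_deriv (by field_simp; ring)

theorem HasDerivAt.rpow_const_of_rate (hx : HasDerivAt x (k * x t) t) (hx₀ : 0 < x t) (r : ℝ) :
    HasDerivAt (fun u => x u ^ r) (r * k * x t ^ r) t := by
  refine (hx.rpow_const (Or.inl hx₀.ne')).congr_deriv ?_
  rw [rpow_sub_one hx₀.ne']
  field_simp

end Invariants

theorem Set.OrdConnected.eq_of_hasDerivAt_zero {E : Type*} [NormedAddCommGroup E]
    [NormedSpace ℝ E] {I : Set ℝ} (hI : I.OrdConnected) {f : ℝ → E}
    (hf : ∀ t ∈ I, HasDerivAt f 0 t) {s t : ℝ} (hs : s ∈ I) (ht : t ∈ I) : f s = f t := by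
  have h := hI.convex.norm_image_sub_le_of_norm_hasDerivWithin_le (C := 0)
    (fun u hu => (hf u hu).hasDerivWithinAt) (fun _ _ => by simp) ht hs
  simpa [sub_eq_zero] using h

theorem Set.OrdConnected.exists_forall_eq_of_hasDerivAt_zero {E : Type*} [NormedAddCommGroup E]
    [NormedSpace ℝ E] {I : Set ℝ} (hI : I.OrdConnected) {f : ℝ → E}
    (hf : ∀ t ∈ I, HasDerivAt f 0 t) : ∃ c, ∀ t ∈ I, f t = c := by
  rcases I.eq_empty_or_nonempty with rfl | ⟨t₀, ht₀⟩
  · exact ⟨0, by simp⟩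
  · exact ⟨f t₀, fun t ht => hI.eq_of_hasDerivAt_zero hf ht ht₀⟩

theorem stmt_1 (I : Set ℝ) (hI : I.OrdConnected) (ap am β₁ : ℝ → ℝ)
    (hpos : ∀ t ∈ I, 0 < ap t)
    (hap : ∀ t ∈ I, HasDerivAt ap (4 * ap t * am t) t)
    (ham : ∀ t ∈ I, HasDerivAt am (2 * (ap t + am t - 16) * am t) t)
    (hβ₁ : ∀ t ∈ I, HasDerivAt β₁ (-(am t) * β₁ t) t) :
    (∃ α : ℝ, ∀ t ∈ I, am t = ap t + 4 * α * Real.sqrt (ap t) + 16) ∧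
    (∀ t ∈ I, ∀ s ∈ I,
      β₁ t * (ap t) ^ ((1 : ℝ) / 4) = β₁ s * (ap s) ^ ((1 : ℝ) / 4)) := by
  have hap' : ∀ t ∈ I, HasDerivAt ap (4 * am t * ap t) t := fun t ht =>
    (hap t ht).congr_deriv (by ring)
  have hsqrt : ∀ t ∈ I, HasDerivAt (fun u => √(ap u)) (2 * am t * √(ap t)) t := by
    intro t ht
    simp only [sqrt_eq_rpow]
    exact ((hap' t ht).rpow_const_of_rate (hpos t ht) _).congr_deriv (by ring)
  have hshift : ∀ t ∈ I, HasDerivAt (fun u => am u - ap u - 16)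
      (2 * am t * (am t - ap t - 16)) t := fun t ht =>
    (((ham t ht).sub (hap t ht)).sub_const 16).congr_deriv (by ring)
  have hquarter : ∀ t ∈ I,
      HasDerivAt (fun u => ap u ^ ((1 : ℝ) / 4)) (am t * ap t ^ ((1 : ℝ) / 4)) t :=
    fun t ht => ((hap' t ht).rpow_const_of_rate (hpos t ht) _).congr_deriv (by ring)
  obtain ⟨c, hc⟩ := hI.exists_forall_eq_of_hasDerivAt_zero fun t ht =>
    (hshift t ht).div_zero_of_equal_rates (hsqrt t ht) (sqrt_pos.2 (hpos t ht)).ne'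
  refine ⟨⟨c / 4, fun t ht => ?_⟩, fun t ht s hs => hI.eq_of_hasDerivAt_zero
    (fun u hu => (hβ₁ u hu).mul_zero_of_opposite_rates (hquarter u hu)) ht hs⟩
  have h := hc t ht
  rw [div_eq_iff (sqrt_pos.2 (hpos t ht)).ne'] at h
  linarith
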